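/- arXiv:2111.09255 — 5 statements merged into one kernel-verified Lean document; each statement's English description precedes it below -/
import Mathlib

section
/- Let V be a finite type, G a simple graph on V that is a tree (connected and acyclic), A a finite set of vertices of G, and E' a finite set of edges of G with |E'| + 1 < |A|. Then the graph obtained from G by deleting the edges in E' still contains two distinct vertices of A in the same connected component; that is, there exist u, v ∈ A with u ≠ v such that u and v are reachable from one another in G.deleteEdges E'. -/
/-!
Call a set of vertices separated when no two of its elements are joined by a walk. Deleting one
edge `s(x, y)` can only separate vertices whose connecting path runs through that edge, so among
the vertices of a separated set at most one (the one in the component of `y`) loses its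
connection by the deletion; the others were already separated before. Hence, by induction on
the deleted edges, a set separated by `G.deleteEdges E'` has at most `#E' + 1` elements as soon as
`G` is connected.
-/

open Finset

namespace SimpleGraph

variable {V : Type*} {G : SimpleGraph V}

lemma Reachable.deleteEdges_singleton_of_not_reachable {u v x y : V} (huv : G.Reachable u v)
    (huy : ¬ (G.deleteEdges {s(x, y)}).Reachable u y)
    (hvy : ¬ (G.deleteEdges {s(x, y)}).Reachable v y) :
    (G.deleteEdges {s(x, y)}).Reachable u v := by
  classical
  obtain ⟨w⟩ := huv
  exact reachable_deleteEdges_iff_exists_walk.mpr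
    ⟨w.bypass, w.bypass_isPath.isTrail.not_mem_edges_of_not_reachable huy hvy⟩

lemma exists_subset_pairwise_not_reachable_of_deleteEdges_singleton (e : Sym2 V)
    {A : Finset V} (hA : (A : Set V).Pairwise fun u v ↦ ¬ (G.deleteEdges {e}).Reachable u v) :
    ∃ B ⊆ A, #A ≤ #B + 1 ∧ (B : Set V).Pairwise fun u v ↦ ¬ G.Reachable u v := by
  classical
  induction e using Sym2.ind with
  | _ x y =>
  set H := G.deleteEdges {s(x, y)}
  refine ⟨A.filter (¬ H.Reachable · y), filter_subset _ _, ?_, ?_⟩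
  · have hy : #(A.filter (¬¬ H.Reachable · y)) ≤ 1 := by
      refine card_le_one.mpr fun u hu v hv ↦ ?_
      rw [mem_filter, not_not] at hu hv
      by_contra huv
      exact hA hu.1 hv.1 huv (hu.2.trans hv.2.symm)
    have := card_filter_add_card_filter_not (s := A) (¬ H.Reachable · y)
    omega
  · intro u hu v hv huv hreach
    rw [coe_filter, Set.mem_ofPred_eq] at hu hv
    exact hA hu.1 hv.1 huv (hreach.deleteEdges_singleton_of_not_reachable hu.2 hv.2)

theorem Preconnected.card_le_of_pairwise_not_reachable_deleteEdges (hG : G.Preconnected)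
    (E' : Finset (Sym2 V)) {A : Finset V}
    (hA : (A : Set V).Pairwise fun u v ↦ ¬ (G.deleteEdges E').Reachable u v) :
    #A ≤ #E' + 1 := by
  classical
  induction E' using Finset.induction_on generalizing A with
  | empty =>
    rw [coe_empty, deleteEdges_empty] at hA
    refine card_le_one.mpr fun u hu v hv ↦ ?_
    by_contra huv
    exact hA hu hv huv (hG u v)
  | insert e E' he ih =>
    rw [coe_insert, Set.insert_eq, Set.union_comm, ← deleteEdges_deleteEdges] at hA
    obtain ⟨B, -, hAB, hB⟩ := exists_subset_pairwise_not_reachable_of_deleteEdges_singleton e hA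
    rw [card_insert_of_notMem he]
    have := ih hB
    omega

end SimpleGraph

theorem stmt_0_general {V : Type*} (G : SimpleGraph V) (hG : G.IsTree)
    (A : Finset V) (E' : Finset (Sym2 V))
    (hcard : E'.card + 1 < A.card) :
    ∃ u ∈ A, ∃ v ∈ A, u ≠ v ∧ (G.deleteEdges ↑E').Reachable u v := by
  by_contra hsep
  push Not at hsep
  have := hG.connected.preconnected.card_le_of_pairwise_not_reachable_deleteEdges E'
    (A := A) fun u hu v hv huv ↦ hsep u hu v hv huv
  omega

theorem stmt_0 {V : Type*} [Fintype V] (G : SimpleGraph V) (hG : G.IsTree)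
    (A : Finset V) (E' : Finset (Sym2 V)) (hE' : ∀ e ∈ E', e ∈ G.edgeSet)
    (hcard : E'.card + 1 < A.card) :
    ∃ u ∈ A, ∃ v ∈ A, u ≠ v ∧ (G.deleteEdges ↑E').Reachable u v :=
  stmt_0_general G hG A E' hcard
end

section
/- Let (V, r, par) be a rooted tree and s a server trajectory on it. Let A be a finite set of leaves, let τ : V → ℕ be injective on A, and suppose s(τ(ℓ)) = ℓ for every ℓ ∈ A. Let T^A = {v : V | some ℓ ∈ A lies in T_v}, and for v ∈ T^A let τ̂(v) = max{τ(ℓ) : ℓ ∈ A and ℓ lies in T_v}. Then the total number of upward crossings Σ over non-root vertices v ∈ T^A of x_s(v, (τ̂(v), τ̂(par v)]) is at least |A| − 1. -/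
open scoped Classical

/-- `u` lies in the subtree rooted at `v` (w.r.t. the parent map `par`). -/
def InSubtree {V : Type*} (par : V → V) (u v : V) : Prop :=
  ∃ n : ℕ, par^[n] u = v

/-- `v` is a leaf of the rooted tree with parent map `par`. -/
def IsLeafOf {V : Type*} (par : V → V) (v : V) : Prop :=
  ¬ ∃ u : V, u ≠ v ∧ par u = v

/-- `s` is a server trajectory: at each timestep the server stays put, moves to its
parent, or moves to one of its children. -/
def IsTrajectory {V : Type*} (par : V → V) (s : ℕ → V) : Prop :=
  ∀ t : ℕ, s (t + 1) = s t ∨ s (t + 1) = par (s t) ∨ par (s (t + 1)) = s t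

/-- `upcross par s v a c` is the number of timesteps `t` with `a < t ≤ c` at which the
trajectory `s` crosses the edge from `v` to its parent upwards, i.e. `s (t-1)` lies in the
subtree `T_v` but `s t` does not. -/
noncomputable def upcross {V : Type*} (par : V → V) (s : ℕ → V) (v : V) (a c : ℕ) : ℕ :=
  Set.ncard {t : ℕ | a < t ∧ t ≤ c ∧ InSubtree par (s (t - 1)) v ∧ ¬ InSubtree par (s t) v}

lemma leaf_subtree {V : Type*} {par : V → V} {ℓ : V} (h : IsLeafOf par ℓ) {u : V}
    (hu : InSubtree par u ℓ) : u = ℓ := by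
  obtain ⟨n, hn⟩ := hu
  induction n generalizing u with
  | zero => exact hn
  | succ k ih =>
    rw [Function.iterate_succ_apply'] at hn
    by_cases hc : par^[k] u = ℓ
    · exact ih hc
    · exact absurd ⟨par^[k] u, hc, hn⟩ h

lemma exit_lemma {V : Type*} (par : V → V) (s : ℕ → V) (w : V) {a c : ℕ} (hac : a ≤ c)
    (ha : InSubtree par (s a) w) (hc : ¬ InSubtree par (s c) w) :
    ∃ t, a < t ∧ t ≤ c ∧ InSubtree par (s (t - 1)) w ∧ ¬ InSubtree par (s t) w := by
  have hlt : a < c := by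
    rcases lt_or_eq_of_le hac with h | h
    · exact h
    · exact absurd (h ▸ ha) hc
  have hex : ∃ t, a < t ∧ t ≤ c ∧ ¬ InSubtree par (s t) w := ⟨c, hlt, le_rfl, hc⟩
  classical
  set t := Nat.find hex with ht
  obtain ⟨h1, h2, h3⟩ := Nat.find_spec hex
  refine ⟨t, h1, h2, ?_, h3⟩
  rcases Nat.lt_or_ge a (t - 1) with h | h
  · by_contra hcon
    have : ¬ (a < t - 1 ∧ t - 1 ≤ c ∧ ¬ InSubtree par (s (t - 1)) w) :=
      Nat.find_min hex (by omega)
    push_neg at this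
    exact hcon (this h (by omega))
  · have : t - 1 = a := by omega
    rw [this]; exact ha

theorem stmt_2 {V : Type*} [Fintype V] (r : V) (par : V → V)
    (hroot : par r = r) (hconn : ∀ v : V, ∃ n : ℕ, par^[n] v = r)
    (s : ℕ → V) (hs : IsTrajectory par s)
    (A : Finset V) (hleaf : ∀ ℓ ∈ A, IsLeafOf par ℓ)
    (τ : V → ℕ) (hinj : Set.InjOn τ ↑A)
    (hserve : ∀ ℓ ∈ A, s (τ ℓ) = ℓ)
    (τhat : V → ℕ)
    (hτhat : ∀ v : V, (∃ ℓ ∈ A, InSubtree par ℓ v) →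
      IsGreatest {m : ℕ | ∃ ℓ ∈ A, InSubtree par ℓ v ∧ τ ℓ = m} (τhat v)) :
    ((∑ v ∈ Finset.univ.filter (fun v => v ≠ r ∧ ∃ ℓ ∈ A, InSubtree par ℓ v),
        upcross par s v (τhat v) (τhat (par v)) : ℕ) : ℤ) ≥ (A.card : ℤ) - 1 := by
  classical
  set M := τhat r with hM
  set B := A.filter (fun ℓ => τ ℓ ≠ M) with hB
  -- key existence: for every ℓ ∈ B there is a witness vertex w
  have key : ∀ ℓ : V, ∃ w : V, ℓ ∈ B →
      ((w ≠ r ∧ ∃ ℓ' ∈ A, InSubtree par ℓ' w) ∧ τhat w = τ ℓ ∧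
        1 ≤ upcross par s w (τhat w) (τhat (par w))) := by
    intro ℓ
    by_cases hℓ : ℓ ∈ B
    swap
    · exact ⟨r, fun h => absurd h hℓ⟩
    have hℓA : ℓ ∈ A := (Finset.mem_filter.mp hℓ).1
    have hℓM : τ ℓ ≠ M := (Finset.mem_filter.mp hℓ).2
    -- τ ℓ ≤ τhat at every ancestor
    have hanc : ∀ k : ℕ, InSubtree par ℓ (par^[k] ℓ) := fun k => ⟨k, rfl⟩
    have hdef : ∀ k : ℕ, ∃ ℓ' ∈ A, InSubtree par ℓ' (par^[k] ℓ) :=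
      fun k => ⟨ℓ, hℓA, hanc k⟩
    have hlow : ∀ k : ℕ, τ ℓ ≤ τhat (par^[k] ℓ) :=
      fun k => (hτhat _ (hdef k)).2 ⟨ℓ, hℓA, hanc k, rfl⟩
    have hτℓM : τ ℓ < M := by
      have hle : τ ℓ ≤ M := (hτhat r ⟨ℓ, hℓA, hconn ℓ⟩).2 ⟨ℓ, hℓA, hconn ℓ, rfl⟩
      omega
    -- τhat ℓ = τ ℓ since ℓ is a leaf
    have hτhatℓ : τhat ℓ = τ ℓ := by
      obtain ⟨ℓ', hℓ'A, hsub, heq⟩ := (hτhat ℓ ⟨ℓ, hℓA, ⟨0, rfl⟩⟩).1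
      rw [← heq, leaf_subtree (hleaf ℓ hℓA) hsub]
    -- find the first ancestor where τhat exceeds τ ℓ
    have hexP : ∃ k : ℕ, τ ℓ < τhat (par^[k] ℓ) := by
      obtain ⟨n, hn⟩ := hconn ℓ
      exact ⟨n, by rw [hn]; exact hτℓM⟩
    set k := Nat.find hexP with hk
    have hkspec : τ ℓ < τhat (par^[k] ℓ) := Nat.find_spec hexP
    have hk0 : k ≠ 0 := by
      intro h
      rw [h] at hkspec
      simp only [Function.iterate_zero_apply] at hkspec
      omega
    set w := par^[k - 1] ℓ with hw
    have hparw : par w = par^[k] ℓ := by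
      rw [hw, ← Function.iterate_succ_apply' par (k - 1) ℓ]
      congr 1
      omega
    have hnotP : ¬ τ ℓ < τhat w := Nat.find_min hexP (by omega)
    have hτhatw : τhat w = τ ℓ := le_antisymm (by omega) (hlow (k - 1))
    have hwr : w ≠ r := by
      intro h
      rw [h] at hτhatw
      omega
    refine ⟨w, fun _ => ⟨⟨hwr, ℓ, hℓA, hanc (k - 1)⟩, hτhatw, ?_⟩⟩
    -- show at least one upcrossing
    have hac : τhat w ≤ τhat (par w) := by rw [hparw, hτhatw]; omega
    have ha : InSubtree par (s (τhat w)) w := by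
      rw [hτhatw, hserve ℓ hℓA]; exact hanc (k - 1)
    have hcc : ¬ InSubtree par (s (τhat (par w))) w := by
      obtain ⟨ℓ'', hℓ''A, hsub'', heq''⟩ := (hτhat (par w) (hparw ▸ hdef k)).1
      rw [← heq'', hserve ℓ'' hℓ''A]
      intro hcon
      have : τ ℓ'' ≤ τhat w :=
        (hτhat w ⟨ℓ, hℓA, hanc (k - 1)⟩).2 ⟨ℓ'', hℓ''A, hcon, rfl⟩
      rw [hparw] at heq''
      omega
    obtain ⟨t, ht1, ht2, ht3, ht4⟩ := exit_lemma par s w hac ha hcc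
    have hfin : {t : ℕ | τhat w < t ∧ t ≤ τhat (par w) ∧ InSubtree par (s (t - 1)) w ∧
        ¬ InSubtree par (s t) w}.Finite :=
      Set.Finite.subset (Set.finite_Iic (τhat (par w))) (fun x hx => hx.2.1)
    have : 0 < upcross par s w (τhat w) (τhat (par w)) :=
      (Set.ncard_pos hfin).mpr ⟨t, ht1, ht2, ht3, ht4⟩
    omega
  choose g hg using key
  set S := Finset.univ.filter (fun v => v ≠ r ∧ ∃ ℓ ∈ A, InSubtree par ℓ v) with hS
  have himg : B.image g ⊆ S := by
    intro w hw
    obtain ⟨ℓ, hℓ, rfl⟩ := Finset.mem_image.mp hw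
    exact Finset.mem_filter.mpr ⟨Finset.mem_univ _, (hg ℓ hℓ).1⟩
  have hinj' : Set.InjOn g ↑B := by
    intro a ha b hb hab
    have h1 := (hg a ha).2.1
    have h2 := (hg b hb).2.1
    rw [hab] at h1
    exact hinj (A.filter_subset _ ha) (A.filter_subset _ hb) (h1.symm.trans h2)
  have hcard : (B.image g).card = B.card := Finset.card_image_of_injOn hinj'
  have hsum1 : (B.image g).card ≤ ∑ v ∈ B.image g, upcross par s v (τhat v) (τhat (par v)) := by
    have := Finset.card_nsmul_le_sum (B.image g)
      (fun v => upcross par s v (τhat v) (τhat (par v))) 1 (fun v hv => by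
        obtain ⟨ℓ, hℓ, rfl⟩ := Finset.mem_image.mp hv
        exact (hg ℓ hℓ).2.2)
    simpa using this
  have hsum2 : ∑ v ∈ B.image g, upcross par s v (τhat v) (τhat (par v)) ≤
      ∑ v ∈ S, upcross par s v (τhat v) (τhat (par v)) :=
    Finset.sum_le_sum_of_subset himg
  have hBcard : A.card ≤ B.card + 1 := by
    have hsplit : (A.filter (fun ℓ => τ ℓ ≠ M)).card + (A.filter (fun ℓ => ¬ τ ℓ ≠ M)).card
        = A.card := Finset.card_filter_add_card_filter_not _
    have hone : (A.filter (fun ℓ => ¬ τ ℓ ≠ M)).card ≤ 1 := by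
      refine Finset.card_le_one.mpr (fun a ha b hb => ?_)
      have ha' := Finset.mem_filter.mp ha
      have hb' := Finset.mem_filter.mp hb
      exact hinj ha'.1 hb'.1 (by omega)
    rw [hB]
    omega
  have htotal : B.card ≤ ∑ v ∈ S, upcross par s v (τhat v) (τhat (par v)) := by omega
  omega
end

section
/- Let (V, r, par) be a rooted tree and let s₁, …, s_k be k server trajectories on it. Let A be a finite set of leaves, let τ : V → ℕ be injective on A, and suppose that for every ℓ ∈ A there is some server i with s_i(τ(ℓ)) = ℓ. Let T^A = {v : V | some ℓ ∈ A lies in T_v}, and for v ∈ T^A let τ̂(v) = max{τ(ℓ) : ℓ ∈ A and ℓ lies in T_v}. Then Σ over non-root vertices v ∈ T^A of Σ_{i=1}^{k} x_{s_i}(v, (τ̂(v), τ̂(par v)]) is at least |A| − k (as integers). -/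
open scoped Classical

namespace Stmt3Aux

lemma inSubtree_par {V : Type*} {par : V → V} {u v : V} (h : InSubtree par u v) :
    InSubtree par u (par v) := by
  obtain ⟨n, rfl⟩ := h
  exact ⟨n + 1, by rw [Function.iterate_succ_apply']⟩

lemma inSubtree_iterate {V : Type*} {par : V → V} {u w : V} {a b : ℕ} (hab : a ≤ b)
    (h : InSubtree par u (par^[a] w)) : InSubtree par u (par^[b] w) := by
  induction b with
  | zero => simpa [Nat.le_zero.mp hab] using h
  | succ b ih =>
      rcases Nat.lt_or_ge a (b + 1) with hl | hg
      · rw [Function.iterate_succ_apply']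
        exact inSubtree_par (ih (Nat.lt_succ_iff.mp hl))
      · have : a = b + 1 := le_antisymm hab hg
        subst this; exact h

lemma eq_of_inSubtree_leaf {V : Type*} {par : V → V} {ℓ : V} (hleaf : IsLeafOf par ℓ) :
    ∀ n u, par^[n] u = ℓ → u = ℓ := by
  intro n
  induction n with
  | zero => intro u h; exact h
  | succ n ih =>
      intro u h
      rw [Function.iterate_succ_apply] at h
      have h2 : par u = ℓ := ih (par u) h
      by_contra hne
      exact hleaf ⟨u, hne, h2⟩

lemma exists_crossing {V : Type*} (r : V) (par : V → V)
    (hconn : ∀ v : V, ∃ n : ℕ, par^[n] v = r)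
    (A : Finset V) (τ τhat : V → ℕ)
    (hτhat : ∀ v : V, (∃ m ∈ A, InSubtree par m v) →
      IsGreatest {n : ℕ | ∃ m ∈ A, InSubtree par m v ∧ τ m = n} (τhat v))
    (σ : ℕ → V) (ℓ ℓ' : V) (hℓ : ℓ ∈ A) (hℓ' : ℓ' ∈ A)
    (hleafℓ : IsLeafOf par ℓ) (hne : ℓ' ≠ ℓ)
    (hσ0 : σ (τ ℓ) = ℓ) (hσ1 : σ (τ ℓ') = ℓ') (hlt : τ ℓ < τ ℓ') :
    ∃ v t, v ≠ r ∧ (∃ m ∈ A, InSubtree par m v) ∧ τhat v < t ∧ t ≤ τhat (par v) ∧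
      InSubtree par (σ (t - 1)) v ∧ ¬ InSubtree par (σ t) v ∧ τ ℓ < t ∧ t ≤ τ ℓ' := by
  classical
  -- τhat at the leaf ℓ equals τ ℓ
  have hτℓ : τhat ℓ = τ ℓ := by
    have hG := hτhat ℓ ⟨ℓ, hℓ, ⟨0, rfl⟩⟩
    obtain ⟨m', hm', hsub, hτ⟩ := hG.1
    rw [← hτ]
    obtain ⟨n, hn⟩ := hsub
    rw [eq_of_inSubtree_leaf hleafℓ n m' hn]
  -- minimal j with ℓ' in the subtree of par^[j] ℓ
  have hex : ∃ j, InSubtree par ℓ' (par^[j] ℓ) := by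
    obtain ⟨n, hn⟩ := hconn ℓ
    exact ⟨n, hn ▸ hconn ℓ'⟩
  set m := Nat.find hex with hm_def
  have hm : InSubtree par ℓ' (par^[m] ℓ) := Nat.find_spec hex
  have hnotm : ∀ j < m, ¬ InSubtree par ℓ' (par^[j] ℓ) := fun j hj => Nat.find_min hex hj
  have hm0 : 0 < m := by
    rcases Nat.eq_zero_or_pos m with h0 | h; swap; · exact h
    exfalso
    have := hm
    rw [h0] at this
    obtain ⟨n, hn⟩ := this
    exact hne (eq_of_inSubtree_leaf hleafℓ n ℓ' hn)
  set J := m - 1 with hJ_def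
  have hJm : J + 1 = m := Nat.succ_pred_eq_of_pos hm0
  -- g t : current window index
  set g : ℕ → ℕ := fun t => Nat.findGreatest (fun j => τhat (par^[j] ℓ) < t) J with hg_def
  have hgJ : ∀ t, g t ≤ J := fun t => Nat.findGreatest_le J
  have hP0 : ∀ t, τ ℓ < t → τhat (par^[0] ℓ) < t := by
    intro t ht; simpa [hτℓ] using ht
  -- the minimal bad time
  have hQ : ∃ t, τ ℓ < t ∧ ¬ InSubtree par (σ t) (par^[g t] ℓ) := by
    refine ⟨τ ℓ', hlt, ?_⟩
    rw [hσ1]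
    exact hnotm (g (τ ℓ')) (lt_of_le_of_lt (hgJ _) (Nat.sub_lt hm0 one_pos))
  set t := Nat.find hQ with ht_def
  obtain ⟨ht0, htbad⟩ : τ ℓ < t ∧ ¬ InSubtree par (σ t) (par^[g t] ℓ) := Nat.find_spec hQ
  have htmin : ∀ u < t, τ ℓ < u → InSubtree par (σ u) (par^[g u] ℓ) := by
    intro u hu hu0
    have := Nat.find_min hQ hu
    push_neg at this
    exact this hu0
  have ht1 : t ≤ τ ℓ' := by
    apply Nat.find_min'
    refine ⟨hlt, ?_⟩
    rw [hσ1]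
    exact hnotm (g (τ ℓ')) (lt_of_le_of_lt (hgJ _) (Nat.sub_lt hm0 one_pos))
  refine ⟨par^[g t] ℓ, t, ?_, ⟨ℓ, hℓ, ⟨g t, rfl⟩⟩, ?_, ?_, ?_, htbad, ht0, ht1⟩
  · -- not the root
    intro hr
    exact htbad (hr ▸ hconn (σ t))
  · -- τhat v < t
    show τhat (par^[g t] ℓ) < t
    exact Nat.findGreatest_spec (P := fun j => τhat (par^[j] ℓ) < t) (Nat.zero_le J) (hP0 t ht0)
  · -- t ≤ τhat (par v)
    have harrow : par (par^[g t] ℓ) = par^[g t + 1] ℓ :=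
      (Function.iterate_succ_apply' par (g t) ℓ).symm
    rw [harrow]
    rcases eq_or_lt_of_le (hgJ t) with hEq | hLt
    · have h' : g t + 1 = m := by omega
      rw [h']
      exact le_trans ht1 ((hτhat (par^[m] ℓ) ⟨ℓ', hℓ', hm⟩).2 ⟨ℓ', hℓ', hm, rfl⟩)
    · by_contra hcon
      push_neg at hcon
      exact Nat.findGreatest_is_greatest (P := fun j => τhat (par^[j] ℓ) < t)
        (Nat.lt_succ_self (g t)) hLt hcon
  · -- σ (t-1) in subtree
    rcases eq_or_lt_of_le (Nat.succ_le_of_lt ht0) with hEq | hLt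
    · have : t - 1 = τ ℓ := by omega
      rw [this, hσ0]
      exact ⟨g t, rfl⟩
    · have h1 : τ ℓ < t - 1 := by omega
      have h2 : t - 1 < t := by omega
      have hin := htmin (t - 1) h2 h1
      have hmono : g (t - 1) ≤ g t :=
        Nat.findGreatest_mono (fun j hj => lt_of_lt_of_le hj (by omega)) le_rfl
      exact inSubtree_iterate hmono hin

end Stmt3Aux
open Stmt3Aux in
theorem stmt_3 {V : Type*} [Fintype V] (r : V) (par : V → V)
    (hroot : par r = r) (hconn : ∀ v : V, ∃ n : ℕ, par^[n] v = r)
    (k : ℕ) (s : Fin k → ℕ → V) (hs : ∀ i, IsTrajectory par (s i))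
    (A : Finset V) (hleaf : ∀ ℓ ∈ A, IsLeafOf par ℓ)
    (τ : V → ℕ) (hinj : Set.InjOn τ ↑A)
    (hserve : ∀ ℓ ∈ A, ∃ i : Fin k, s i (τ ℓ) = ℓ)
    (τhat : V → ℕ)
    (hτhat : ∀ v : V, (∃ ℓ ∈ A, InSubtree par ℓ v) →
      IsGreatest {m : ℕ | ∃ ℓ ∈ A, InSubtree par ℓ v ∧ τ ℓ = m} (τhat v)) :
    ((∑ v ∈ Finset.univ.filter (fun v => v ≠ r ∧ ∃ ℓ ∈ A, InSubtree par ℓ v),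
        ∑ i : Fin k, upcross par (s i) v (τhat v) (τhat (par v)) : ℕ) : ℤ)
      ≥ (A.card : ℤ) - (k : ℤ) := by
  classical
  rcases A.eq_empty_or_nonempty with rfl | hAne
  · simp
  obtain ⟨ℓ₀, hℓ₀⟩ := hAne
  have hk : Nonempty (Fin k) := ⟨(hserve ℓ₀ hℓ₀).choose⟩
  -- assignment of servers
  set ι : V → Fin k := fun ℓ =>
    if h : ∃ i, s i (τ ℓ) = ℓ then h.choose else Classical.arbitrary _ with hι_def
  have hι : ∀ ℓ ∈ A, s (ι ℓ) (τ ℓ) = ℓ := by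
    intro ℓ hℓ
    have h := hserve ℓ hℓ
    simp only [hι_def, dif_pos h]
    exact h.choose_spec
  -- leaves that are not the last served by their server
  set A' : Finset V := A.filter (fun ℓ => ∃ x ∈ A, ι x = ι ℓ ∧ τ ℓ < τ x) with hA'_def
  have hA'sub : A' ⊆ A := Finset.filter_subset _ _
  -- |A| ≤ |A'| + k
  have hcardAA' : A.card ≤ A'.card + k := by
    have hinjk : (A \ A').card ≤ k := by
      have := Finset.card_le_card_of_injOn ι
        (fun a _ => Finset.mem_univ (ι a)) (s := A \ A') (t := Finset.univ) ?_
      · simpa using this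
      · intro x hx y hy hxy
        simp only [Finset.coe_sdiff, Set.mem_diff, Finset.mem_coe] at hx hy
        by_contra hne
        have hτne : τ x ≠ τ y := fun e => hne (hinj hx.1 hy.1 e)
        rcases lt_or_gt_of_ne hτne with h | h
        · exact hx.2 (Finset.mem_filter.mpr ⟨hx.1, y, hy.1, hxy.symm, h⟩)
        · exact hy.2 (Finset.mem_filter.mpr ⟨hy.1, x, hx.1, hxy, h⟩)
    have := Finset.card_sdiff_of_subset hA'sub
    have hle := Finset.card_le_card hA'sub
    omega
  -- next leaf served by the same server
  have hnext : ∀ ℓ ∈ A', ∃ ℓ' ∈ A, ι ℓ' = ι ℓ ∧ τ ℓ < τ ℓ' ∧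
      ∀ y ∈ A, ι y = ι ℓ → τ ℓ < τ y → τ ℓ' ≤ τ y := by
    intro ℓ hℓ
    obtain ⟨-, hex⟩ := Finset.mem_filter.mp hℓ
    set B := A.filter (fun x => ι x = ι ℓ ∧ τ ℓ < τ x) with hB_def
    have hBne : B.Nonempty := by
      obtain ⟨x, hx, h1, h2⟩ := hex
      exact ⟨x, Finset.mem_filter.mpr ⟨hx, h1, h2⟩⟩
    obtain ⟨x, hxB, hmin⟩ := B.exists_min_image τ hBne
    rw [hB_def, Finset.mem_filter] at hxB
    exact ⟨x, hxB.1, hxB.2.1, hxB.2.2,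
      fun y hy h1 h2 => hmin y (Finset.mem_filter.mpr ⟨hy, h1, h2⟩)⟩
  choose nxt hnxtA hnxtι hnxtlt hnxtmin using hnext
  -- crossings
  have hcross : ∀ ℓ (h : ℓ ∈ A'), ∃ v t, v ≠ r ∧ (∃ m ∈ A, InSubtree par m v) ∧
      τhat v < t ∧ t ≤ τhat (par v) ∧ InSubtree par (s (ι ℓ) (t - 1)) v ∧
      ¬ InSubtree par (s (ι ℓ) t) v ∧ τ ℓ < t ∧ t ≤ τ (nxt ℓ h) := by
    intro ℓ h
    have hℓA : ℓ ∈ A := hA'sub h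
    refine exists_crossing r par hconn A τ τhat hτhat (s (ι ℓ)) ℓ (nxt ℓ h)
      hℓA (hnxtA ℓ h) (hleaf ℓ hℓA) ?_ (hι ℓ hℓA) ?_ (hnxtlt ℓ h)
    · intro e
      have := hnxtlt ℓ h
      rw [e] at this
      exact lt_irrefl _ this
    · rw [← hnxtι ℓ h]
      exact hι _ (hnxtA ℓ h)
  choose cv ct hvne hvwit h1 h2 h3 h4 h5 h6 using hcross
  -- counting
  set F : Finset V := Finset.univ.filter (fun v => v ≠ r ∧ ∃ ℓ ∈ A, InSubtree par ℓ v)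
    with hF_def
  set φ : {x // x ∈ A'} → V × Fin k := fun x => (cv x.1 x.2, ι x.1) with hφ_def
  have hmapsto : ∀ x ∈ A'.attach, φ x ∈ F ×ˢ Finset.univ := by
    intro x _
    refine Finset.mem_product.mpr ⟨?_, Finset.mem_univ _⟩
    exact Finset.mem_filter.mpr ⟨Finset.mem_univ _, hvne x.1 x.2, hvwit x.1 x.2⟩
  have hsplit : A'.card = ∑ p ∈ F ×ˢ Finset.univ,
      (A'.attach.filter (fun x => φ x = p)).card := by
    rw [← Finset.card_attach]
    exact Finset.card_eq_sum_card_fiberwise hmapsto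
  -- key monotonicity for injectivity of crossing times
  have hkey : ∀ (x y : {a // a ∈ A'}), ι x.1 = ι y.1 → τ x.1 < τ y.1 →
      ct x.1 x.2 < ct y.1 y.2 := by
    intro x y hι' hτ'
    have hyA : y.1 ∈ A := hA'sub y.2
    have := hnxtmin x.1 x.2 y.1 hyA hι'.symm hτ'
    calc ct x.1 x.2 ≤ τ (nxt x.1 x.2) := h6 x.1 x.2
      _ ≤ τ y.1 := this
      _ < ct y.1 y.2 := h5 y.1 y.2
  -- fiberwise bound
  have hfiber : ∀ p ∈ F ×ˢ Finset.univ, (A'.attach.filter (fun x => φ x = p)).card ≤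
      upcross par (s p.2) p.1 (τhat p.1) (τhat (par p.1)) := by
    rintro ⟨v, i⟩ -
    set fib := A'.attach.filter (fun x => φ x = (v, i)) with hfib_def
    have hctinj : Set.InjOn (fun (x : {a // a ∈ A'}) => ct x.1 x.2) ↑fib := by
      intro x hx y hy hxy
      simp only [hfib_def, Finset.coe_filter, Set.mem_setOf_eq, hφ_def, Prod.mk.injEq] at hx hy
      have hιxy : ι x.1 = ι y.1 := by rw [hx.2.2, hy.2.2]
      by_contra hne
      have hne' : x.1 ≠ y.1 := fun e => hne (Subtype.ext e)
      have hτne : τ x.1 ≠ τ y.1 := fun e => hne' (hinj (hA'sub x.2) (hA'sub y.2) e)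
      rcases lt_or_gt_of_ne hτne with h | h
      · exact absurd hxy (ne_of_lt (hkey x y hιxy h))
      · exact absurd hxy.symm (ne_of_lt (hkey y x hιxy.symm h))
    have hXfin : ({t : ℕ | τhat v < t ∧ t ≤ τhat (par v) ∧
        InSubtree par (s i (t - 1)) v ∧ ¬ InSubtree par (s i t) v}).Finite :=
      (Set.finite_Iic (τhat (par v))).subset (fun t ht => ht.2.1)
    have hsubX : ↑(fib.image (fun (x : {a // a ∈ A'}) => ct x.1 x.2)) ⊆
        {t : ℕ | τhat v < t ∧ t ≤ τhat (par v) ∧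
          InSubtree par (s i (t - 1)) v ∧ ¬ InSubtree par (s i t) v} := by
      intro t ht
      simp only [Finset.coe_image, Set.mem_image, Finset.mem_coe] at ht
      obtain ⟨x, hx, rfl⟩ := ht
      simp only [hfib_def, Finset.mem_filter, hφ_def, Prod.mk.injEq] at hx
      obtain ⟨-, hv, hi⟩ := hx
      subst hv
      rw [← hi]
      exact ⟨h1 x.1 x.2, h2 x.1 x.2, h3 x.1 x.2, h4 x.1 x.2⟩
    calc fib.card = (fib.image (fun (x : {a // a ∈ A'}) => ct x.1 x.2)).card :=
          (Finset.card_image_of_injOn hctinj).symm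
      _ = (↑(fib.image (fun (x : {a // a ∈ A'}) => ct x.1 x.2)) : Set ℕ).ncard :=
          (Set.ncard_coe_finset _).symm
      _ ≤ upcross par (s i) v (τhat v) (τhat (par v)) :=
          Set.ncard_le_ncard hsubX hXfin
  have hsum : A'.card ≤ ∑ v ∈ F, ∑ i : Fin k,
      upcross par (s i) v (τhat v) (τhat (par v)) := by
    rw [hsplit, ← Finset.sum_product F Finset.univ
      (fun p => upcross par (s p.2) p.1 (τhat p.1) (τhat (par p.1)))]
    exact Finset.sum_le_sum hfiber
  have : A.card ≤ (∑ v ∈ F, ∑ i : Fin k,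
      upcross par (s i) v (τhat v) (τhat (par v))) + k := le_trans hcardAA' (by omega)
  rw [hF_def] at this
  omega
end

section
/- Let (V, r, par) be a rooted tree and s a server trajectory on it. Let A be a finite set of vertices that is an antichain for the subtree order (for distinct u, v ∈ A, u does not lie in T_v). For each v ∈ A let ℓ_v be a leaf lying in T_v and let b_v < e_v be naturals, such that the 2|A| numbers {b_v, e_v : v ∈ A} are pairwise distinct and there exists t_v with b_v < t_v ≤ e_v and s(t_v) = ℓ_v. Let T^A = {w : V | some v ∈ A lies in T_w} and let τ : V → ℕ satisfy: (a) τ(w) ≥ e_u for every w ∈ T^A and every u ∈ A lying in T_w; (b) τ(u) ≤ τ(w) whenever u, w ∈ T^A and u lies in T_w. Then Σ over non-root v ∈ A of x_s(v, (b_v, τ(par v)]) plus Σ over non-root v ∈ T^A \ A of x_s(v, (τ(v), τ(par v)]) is at least |A| − 1. -/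
open scoped Classical

lemma subtree_trans {V : Type*} {par : V → V} {u v w : V}
    (h1 : InSubtree par u v) (h2 : InSubtree par v w) : InSubtree par u w := by
  obtain ⟨n, rfl⟩ := h1; obtain ⟨m, rfl⟩ := h2
  exact ⟨m + n, Function.iterate_add_apply par m n u⟩

lemma subtree_step {V : Type*} {par : V → V} {u v : V}
    (h : InSubtree par u v) : InSubtree par u (par v) := by
  obtain ⟨n, rfl⟩ := h
  exact ⟨n + 1, Function.iterate_succ_apply' par n u⟩

lemma eq_root_of_periodic {V : Type*} {r : V} {par : V → V} (hroot : par r = r)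
    (hconn : ∀ v : V, ∃ n : ℕ, par^[n] v = r) {v : V} {n : ℕ} (hn : n ≠ 0)
    (h : par^[n] v = v) : v = r := by
  obtain ⟨N, hN⟩ := hconn v
  have hper : ∀ k, par^[k * n] v = v := by
    intro k
    induction k with
    | zero => simp
    | succ k ih =>
      have : (k + 1) * n = k * n + n := by ring
      rw [this, Function.iterate_add_apply, h, ih]
  have hNn : N ≤ N * n := Nat.le_mul_of_pos_right N (Nat.pos_of_ne_zero hn)
  have h1 : par^[N * n] v = v := hper N
  have h2 : par^[N * n] v = r := by
    have : N * n = (N * n - N) + N := by omega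
    rw [this, Function.iterate_add_apply, hN, Function.iterate_fixed hroot]
  rw [h2] at h1; exact h1.symm

lemma subtree_comparable {V : Type*} {par : V → V} {x u v : V}
    (h1 : InSubtree par x u) (h2 : InSubtree par x v) :
    InSubtree par u v ∨ InSubtree par v u := by
  obtain ⟨n, rfl⟩ := h1; obtain ⟨m, rfl⟩ := h2
  rcases le_total n m with h | h
  · left
    exact ⟨m - n, by rw [← Function.iterate_add_apply, Nat.sub_add_cancel h]⟩
  · right
    exact ⟨n - m, by rw [← Function.iterate_add_apply, Nat.sub_add_cancel h]⟩

lemma upcross_eq_card {V : Type*} (par : V → V) (s : ℕ → V) (v : V) (a c : ℕ) :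
    upcross par s v a c = ((Finset.Ioc a c).filter
      (fun t => InSubtree par (s (t - 1)) v ∧ ¬ InSubtree par (s t) v)).card := by
  classical
  rw [upcross, ← Set.ncard_coe_finset]
  congr 1
  ext t
  simp [Finset.mem_Ioc, and_assoc]

/-- Core crossing lemma: between serving `v` and serving `v'`, the server performs an
upward crossing of some edge on the path from `v` upwards, within its window. -/
lemma crossing_core {V : Type*} (r : V) (par : V → V) (hroot : par r = r)
    (hconn : ∀ v : V, ∃ n : ℕ, par^[n] v = r)
    (s : ℕ → V) (A : Finset V)
    (hanti : ∀ u ∈ A, ∀ v ∈ A, u ≠ v → ¬ InSubtree par u v)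
    (e τ : V → ℕ)
    (hτa : ∀ w : V, (∃ v ∈ A, InSubtree par v w) →
      ∀ u ∈ A, InSubtree par u w → e u ≤ τ w)
    (v v' : V) (hv : v ∈ A) (hv' : v' ∈ A) (hne : v ≠ v')
    (tv t' : ℕ) (htv : InSubtree par (s tv) v) (ht' : InSubtree par (s t') v')
    (hlt : tv < t') (hte : t' ≤ e v') :
    ∃ w t, InSubtree par v w ∧ w ≠ r ∧ (w = v ∨ (w ∉ A ∧ τ w < t)) ∧
      t ≤ τ (par w) ∧ tv < t ∧ t ≤ t' ∧
      InSubtree par (s (t - 1)) w ∧ ¬ InSubtree par (s t) w := by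
  classical
  set w : ℕ → V := fun j => par^[j] v with hwdef
  have hwsucc : ∀ j, par (w j) = w (j + 1) := fun j =>
    (Function.iterate_succ_apply' par j v).symm
  have hvw : ∀ j, InSubtree par v (w j) := fun j => ⟨j, rfl⟩
  have hv'r : InSubtree par v' r := hconn v'
  have hm_ex : ∃ j, InSubtree par v' (w j) := by
    obtain ⟨N, hN⟩ := hconn v
    exact ⟨N, by simp only [hwdef, hN]; exact hv'r⟩
  set m := Nat.find hm_ex with hm
  have hmspec : InSubtree par v' (w m) := Nat.find_spec hm_ex
  have hmmin : ∀ j < m, ¬ InSubtree par v' (w j) := fun j hj => Nat.find_min hm_ex hj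
  have hm0 : 0 < m := by
    rcases Nat.eq_zero_or_pos m with h0 | h
    · exfalso
      apply hanti v' hv' v hv (Ne.symm hne)
      have : w 0 = v := rfl
      rw [h0, this] at hmspec
      exact hmspec
    · exact h
  have hdisj : ∀ j < m, ∀ x, InSubtree par x v' → ¬ InSubtree par x (w j) := by
    intro j hj x hx hxw
    rcases subtree_comparable hx hxw with h | h
    · exact hmmin j hj h
    · exact hanti v hv v' hv' hne (subtree_trans (hvw j) h)
  set S : ℕ → Set ℕ := fun j => {t | tv < t ∧ ¬ InSubtree par (s t) (w j)} with hS
  have hSne : ∀ j < m, t' ∈ S j := fun j hj => ⟨hlt, hdisj j hj _ ht'⟩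
  set E : ℕ → ℕ := fun j => sInf (S j) with hE
  have hES : ∀ j < m, E j ∈ S j := fun j hj => Nat.sInf_mem ⟨t', hSne j hj⟩
  have hEle : ∀ j < m, E j ≤ t' := fun j hj => Nat.sInf_le (hSne j hj)
  have hmono : ∀ j, j + 1 < m → E j ≤ E (j + 1) := by
    intro j hj
    apply Nat.sInf_le
    obtain ⟨h1, h2⟩ := hES (j + 1) hj
    exact ⟨h1, fun hcon => h2 (hwsucc j ▸ subtree_step hcon)⟩
  have hgood : ∃ j, j < m ∧ E j ≤ τ (w (j + 1)) ∧ (j = 0 ∨ τ (w j) < E j) := by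
    by_contra hno
    push_neg at hno
    have claim : ∀ j, j < m → τ (w (j + 1)) < E j := by
      intro j
      induction j with
      | zero =>
        intro hj
        by_contra hle
        exact (hno 0 hj (Nat.le_of_not_lt hle)).1 rfl
      | succ j ih =>
        intro hj
        have hjm : j < m := Nat.lt_of_succ_lt hj
        have h1 : τ (w (j + 1)) < E j := ih hjm
        have h2 : τ (w (j + 1)) < E (j + 1) := lt_of_lt_of_le h1 (hmono j hj)
        by_contra hle
        have := (hno (j + 1) hj (Nat.le_of_not_lt hle)).2
        omega
    have hc := claim (m - 1) (by omega)
    have hm1 : m - 1 + 1 = m := Nat.succ_pred_eq_of_pos hm0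
    rw [hm1] at hc
    have h1 : e v' ≤ τ (w m) := hτa (w m) ⟨v, hv, hvw m⟩ v' hv' hmspec
    have h2 : E (m - 1) ≤ t' := hEle (m - 1) (by omega)
    omega
  obtain ⟨j, hjm, hj1, hj2⟩ := hgood
  obtain ⟨hEt, hEnot⟩ := hES j hjm
  have hwjr : w j ≠ r := by
    intro h
    apply hmmin j hjm
    rw [h]
    exact hv'r
  have hcross : InSubtree par (s (E j - 1)) (w j) := by
    have hE1 : tv + 1 ≤ E j := hEt
    rcases eq_or_lt_of_le hE1 with heq | hlt2
    · have : E j - 1 = tv := by omega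
      rw [this]
      exact subtree_trans htv (hvw j)
    · have hEeq : E j = sInf (S j) := rfl
      have hnot : E j - 1 ∉ S j := Nat.notMem_of_lt_sInf (by omega)
      by_contra hcon
      exact hnot ⟨by omega, hcon⟩
  refine ⟨w j, E j, hvw j, hwjr, ?_, ?_, hEt, hEle j hjm, hcross, hEnot⟩
  · rcases Nat.eq_zero_or_pos j with h0 | hpos
    · left
      rw [h0]
      rfl
    · right
      have hvr : v ≠ r := by
        intro h
        exact hanti v' hv' v hv (Ne.symm hne) (h ▸ hv'r)
      have hvne : v ≠ w j := by
        intro h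
        exact hvr (eq_root_of_periodic hroot hconn (Nat.pos_iff_ne_zero.mp hpos) h.symm)
      constructor
      · intro hwA
        exact hanti v hv (w j) hwA hvne (hvw j)
      · rcases hj2 with h0 | h
        · omega
        · exact h
  · rw [hwsucc j]
    exact hj1

theorem stmt_4 {V : Type*} [Fintype V] (r : V) (par : V → V)
    (hroot : par r = r) (hconn : ∀ v : V, ∃ n : ℕ, par^[n] v = r)
    (s : ℕ → V) (hs : IsTrajectory par s)
    (A : Finset V)
    (hanti : ∀ u ∈ A, ∀ v ∈ A, u ≠ v → ¬ InSubtree par u v)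
    (ℓ : V → V) (b e : V → ℕ)
    (hleaf : ∀ v ∈ A, IsLeafOf par (ℓ v) ∧ InSubtree par (ℓ v) v)
    (hbe : ∀ v ∈ A, b v < e v)
    (hdistinct : ∀ u ∈ A, ∀ v ∈ A,
      (b u = b v → u = v) ∧ (e u = e v → u = v) ∧ b u ≠ e v)
    (hserve : ∀ v ∈ A, ∃ t : ℕ, b v < t ∧ t ≤ e v ∧ s t = ℓ v)
    (τ : V → ℕ)
    (hτa : ∀ w : V, (∃ v ∈ A, InSubtree par v w) →
      ∀ u ∈ A, InSubtree par u w → e u ≤ τ w)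
    (hτb : ∀ u w : V, (∃ v ∈ A, InSubtree par v u) → (∃ v ∈ A, InSubtree par v w) →
      InSubtree par u w → τ u ≤ τ w) :
    ((∑ v ∈ A.filter (fun v => v ≠ r), upcross par s v (b v) (τ (par v))
      + ∑ v ∈ Finset.univ.filter
          (fun v => v ≠ r ∧ (∃ u ∈ A, InSubtree par u v) ∧ v ∉ A),
          upcross par s v (τ v) (τ (par v)) : ℕ) : ℤ) ≥ (A.card : ℤ) - 1 := by
  classical
  rcases le_or_gt A.card 1 with hA1 | hA2
  · have h1 : (A.card : ℤ) - 1 ≤ 0 := by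
      have : (A.card : ℤ) ≤ 1 := by exact_mod_cast hA1
      omega
    exact le_trans h1 (Int.natCast_nonneg _)
  -- From here, 2 ≤ A.card
  have hrA : r ∉ A := by
    intro hr
    obtain ⟨u, hu, hune⟩ := Finset.exists_mem_ne hA2 r
    exact hanti u hu r hr hune (hconn u)
  have hAfilter : A.filter (fun v => v ≠ r) = A :=
    Finset.filter_eq_self.mpr (fun v hv h => hrA (h ▸ hv))
  choose! ts h1 h2 h3 using hserve
  have htsinj : ∀ u ∈ A, ∀ v ∈ A, ts u = ts v → u = v := by
    intro u hu v hv htuv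
    by_contra hne
    have hu1 : InSubtree par (s (ts u)) u := by rw [h3 u hu]; exact (hleaf u hu).2
    have hv1 : InSubtree par (s (ts v)) v := by rw [h3 v hv]; exact (hleaf v hv).2
    rw [htuv] at hu1
    rcases subtree_comparable hu1 hv1 with h | h
    · exact hanti u hu v hv hne h
    · exact hanti v hv u hu (Ne.symm hne) h
  have hAne : A.Nonempty := Finset.card_pos.mp (by omega)
  obtain ⟨vmax, hvmaxA, hvmax⟩ := A.exists_max_image ts hAne
  set B := Finset.univ.filter
      (fun v => v ≠ r ∧ (∃ u ∈ A, InSubtree par u v) ∧ v ∉ A) with hB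
  set g : V → Finset ℕ := fun w =>
      (Finset.Ioc (if w ∈ A then b w else τ w) (τ (par w))).filter
        (fun t => InSubtree par (s (t - 1)) w ∧ ¬ InSubtree par (s t) w) with hg
  have key : ∀ v ∈ A.erase vmax, ∃ w t, w ∈ A ∪ B ∧ t ∈ g w ∧ ts v < t ∧
      ∀ u ∈ A, ts v < ts u → t ≤ ts u := by
    intro v hvD
    obtain ⟨hvne, hvA⟩ := Finset.mem_erase.mp hvD
    have hlt : ts v < ts vmax :=
      lt_of_le_of_ne (hvmax v hvA) (fun h => hvne (htsinj v hvA vmax hvmaxA h))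
    have hne' : (A.filter (fun u => ts v < ts u)).Nonempty :=
      ⟨vmax, Finset.mem_filter.mpr ⟨hvmaxA, hlt⟩⟩
    obtain ⟨v', hv'mem, hv'min⟩ := Finset.exists_min_image _ ts hne'
    rw [Finset.mem_filter] at hv'mem
    obtain ⟨hv'A, hv'lt⟩ := hv'mem
    have hvv' : v ≠ v' := fun h => by rw [h] at hv'lt; omega
    obtain ⟨w, t, hsub, hwr, hcase, hwin, htlo, htup, hcr1, hcr2⟩ :=
      crossing_core r par hroot hconn s A hanti e τ hτa v v' hvA hv'A hvv'
        (ts v) (ts v') (by rw [h3 v hvA]; exact (hleaf v hvA).2)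
        (by rw [h3 v' hv'A]; exact (hleaf v' hv'A).2) hv'lt (h2 v' hv'A)
    refine ⟨w, t, ?_, ?_, htlo, ?_⟩
    · rcases hcase with heq | ⟨hwA, _⟩
      · rw [heq]
        exact Finset.mem_union_left _ hvA
      · exact Finset.mem_union_right _
          (Finset.mem_filter.mpr ⟨Finset.mem_univ _, hwr, ⟨v, hvA, hsub⟩, hwA⟩)
    · simp only [hg, Finset.mem_filter, Finset.mem_Ioc]
      refine ⟨⟨?_, hwin⟩, hcr1, hcr2⟩
      rcases hcase with heq | ⟨hwA, hτlt⟩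
      · rw [heq, if_pos hvA]
        exact lt_trans (h1 v hvA) htlo
      · rw [if_neg hwA]
        exact hτlt
    · intro u huA hu
      exact le_trans htup (hv'min u (Finset.mem_filter.mpr ⟨huA, hu⟩))
  choose! W T hmem hgmem hlt2 hmin using key
  have hcard : (A.erase vmax).card ≤ ((A ∪ B).sigma (fun w => g w)).card := by
    apply Finset.card_le_card_of_injOn (fun v => (⟨W v, T v⟩ : Σ _ : V, ℕ))
    · intro v hv
      exact Finset.mem_sigma.mpr ⟨hmem v hv, hgmem v hv⟩
    · intro v₁ h₁ v₂ h₂ heq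
      by_contra hne
      have hT : T v₁ = T v₂ := by
        have := (Sigma.mk.inj_iff.mp heq).2
        exact eq_of_heq this
      simp only [Finset.coe_mem, Finset.mem_coe] at h₁ h₂
      have hA₁ := (Finset.mem_erase.mp h₁).2
      have hA₂ := (Finset.mem_erase.mp h₂).2
      rcases lt_or_gt_of_ne (fun h : ts v₁ = ts v₂ => hne (htsinj _ hA₁ _ hA₂ h)) with h | h
      · have hx := hmin v₁ h₁ v₂ hA₂ h
        have hy := hlt2 v₂ h₂
        omega
      · have hx := hmin v₂ h₂ v₁ hA₁ h
        have hy := hlt2 v₁ h₁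
        omega
  have hdisjAB : Disjoint A B := by
    rw [Finset.disjoint_right]
    intro a ha
    exact (Finset.mem_filter.mp ha).2.2.2
  have hsum : ((A ∪ B).sigma (fun w => g w)).card
      = ∑ v ∈ A, (g v).card + ∑ v ∈ B, (g v).card := by
    rw [Finset.card_sigma, Finset.sum_union hdisjAB]
  have hEq1 : ∑ v ∈ A.filter (fun v => v ≠ r), upcross par s v (b v) (τ (par v))
      = ∑ v ∈ A, (g v).card := by
    rw [hAfilter]
    apply Finset.sum_congr rfl
    intro v hv
    rw [upcross_eq_card]
    simp only [hg, if_pos hv]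
  have hEq2 : ∑ v ∈ B, upcross par s v (τ v) (τ (par v)) = ∑ v ∈ B, (g v).card := by
    apply Finset.sum_congr rfl
    intro v hv
    have hvA : v ∉ A := (Finset.mem_filter.mp hv).2.2.2
    rw [upcross_eq_card]
    simp only [hg, if_neg hvA]
  have hDcard : (A.erase vmax).card = A.card - 1 := Finset.card_erase_of_mem hvmaxA
  have hfin : A.card - 1 ≤ ∑ v ∈ A, (g v).card + ∑ v ∈ B, (g v).card := by
    calc A.card - 1 = (A.erase vmax).card := hDcard.symm
      _ ≤ ((A ∪ B).sigma (fun w => g w)).card := hcard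
      _ = _ := hsum
  rw [ge_iff_le, hEq1, hEq2]
  omega
end

section
/- Let (V, r, par) be a rooted tree and let s₁, …, s_k be k server trajectories on it. Let A be a finite set of vertices that is an antichain for the subtree order (for distinct u, v ∈ A, u does not lie in T_v). For each v ∈ A let ℓ_v be a leaf lying in T_v and let b_v < e_v be naturals, such that the 2|A| numbers {b_v, e_v : v ∈ A} are pairwise distinct and there exist i and t with b_v < t ≤ e_v and s_i(t) = ℓ_v. Let T^A = {w : V | some v ∈ A lies in T_w} and let τ : V → ℕ satisfy: (a) τ(w) ≥ e_u for every w ∈ T^A and every u ∈ A lying in T_w; (b) τ(u) ≤ τ(w) whenever u, w ∈ T^A and u lies in T_w. Then Σ over non-root v ∈ A of Σ_{i=1}^{k} x_{s_i}(v, (b_v, τ(par v)]) plus Σ over non-root v ∈ T^A \ A of Σ_{i=1}^{k} x_{s_i}(v, (τ(v), τ(par v)]) is at least |A| − k (as integers). -/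
open scoped Classical

section Aux
variable {V : Type*} {par : V → V}

lemma insub_trans {u v w : V} (h1 : InSubtree par u v) (h2 : InSubtree par v w) :
    InSubtree par u w := by
  obtain ⟨n, hn⟩ := h1; obtain ⟨m, hm⟩ := h2
  exact ⟨m + n, by rw [Function.iterate_add_apply, hn, hm]⟩

lemma insub_step {u v : V} (h : InSubtree par u v) : u = v ∨ InSubtree par (par u) v := by
  obtain ⟨n, hn⟩ := h
  cases n with
  | zero => exact Or.inl hn
  | succ n => exact Or.inr ⟨n, by rw [← Function.iterate_succ_apply]; exact hn⟩

lemma insub_of_par {u v : V} (h : InSubtree par (par u) v) : InSubtree par u v := by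
  obtain ⟨n, hn⟩ := h
  exact ⟨n + 1, by rw [Function.iterate_succ_apply]; exact hn⟩

lemma anc_comp {x v w : V} (h1 : InSubtree par x v) (h2 : InSubtree par x w) :
    InSubtree par v w ∨ InSubtree par w v := by
  obtain ⟨n, hn⟩ := h1; obtain ⟨m, hm⟩ := h2
  rcases le_total n m with h | h
  · exact Or.inl ⟨m - n, by rw [← hn, ← Function.iterate_add_apply, Nat.sub_add_cancel h, hm]⟩
  · exact Or.inr ⟨n - m, by rw [← hm, ← Function.iterate_add_apply, Nat.sub_add_cancel h, hn]⟩

lemma iterate_root {r : V} (hroot : par r = r) (n : ℕ) : par^[n] r = r := by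
  induction n with
  | zero => rfl
  | succ n ih => rw [Function.iterate_succ_apply, hroot]; exact ih

lemma periodic_eq_root {r : V} (hroot : par r = r) (hconn : ∀ v : V, ∃ n : ℕ, par^[n] v = r)
    {v : V} {n : ℕ} (hn : 0 < n) (h : par^[n] v = v) : v = r := by
  obtain ⟨m, hm⟩ := hconn v
  have hiter : ∀ j, par^[n * j] v = v := by
    intro j; induction j with
    | zero => rfl
    | succ j ih => rw [Nat.mul_succ, Function.iterate_add_apply, h]; exact ih
  have h1 : m ≤ n * m := Nat.le_mul_of_pos_left m hn
  calc v = par^[n * m] v := (hiter m).symm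
    _ = par^[n * m - m] (par^[m] v) := by
        rw [← Function.iterate_add_apply, Nat.sub_add_cancel h1]
    _ = r := by rw [hm]; exact iterate_root hroot _

lemma exit_lemma_s5 {s : ℕ → V} (hs : IsTrajectory par s) {x : V} {a bb : ℕ}
    (ha : InSubtree par (s a) x) (hb : ¬ InSubtree par (s bb) x) (hab : a ≤ bb) :
    ∃ c, a < c ∧ c ≤ bb ∧ s (c - 1) = x ∧ s c = par x ∧
      InSubtree par (s (c - 1)) x ∧ ¬ InSubtree par (s c) x := by
  have hne : a ≠ bb := by rintro rfl; exact hb ha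
  have hab' : a < bb := lt_of_le_of_ne hab hne
  have hP : ∃ n, a < n ∧ ¬ InSubtree par (s n) x := ⟨bb, hab', hb⟩
  set c := Nat.find hP with hcdef
  obtain ⟨hac, hcx⟩ := Nat.find_spec hP
  have hcb : c ≤ bb := Nat.find_le ⟨hab', hb⟩
  have hc1 : InSubtree par (s (c - 1)) x := by
    rcases Nat.lt_or_ge a (c - 1) with h | h
    · by_contra hcon
      exact Nat.find_min hP (show c - 1 < c by omega) ⟨h, hcon⟩
    · have hca : c - 1 = a := by omega
      rw [hca]; exact ha
  have hstep := hs (c - 1)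
  have hc1' : c - 1 + 1 = c := by omega
  rw [hc1'] at hstep
  rcases hstep with h | h | h
  · exact absurd (by rw [h]; exact hc1) hcx
  · rcases insub_step hc1 with heq | hpar
    · exact ⟨c, hac, hcb, heq, by rw [h, heq], hc1, hcx⟩
    · exact absurd (by rw [h]; exact hpar) hcx
  · exact absurd (insub_of_par (by rw [h]; exact hc1)) hcx

lemma card_le_ncard_of_injOn {α : Type*} {F : Finset α} {f : α → ℕ} {S : Set ℕ}
    (hmem : ∀ v ∈ F, f v ∈ S) (hinj : Set.InjOn f F) (hfin : S.Finite) :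
    F.card ≤ S.ncard := by
  classical
  rw [Set.ncard_eq_toFinset_card S hfin]
  exact Finset.card_le_card_of_injOn f (fun v hv => hfin.mem_toFinset.mpr (hmem v hv)) hinj

end Aux

theorem stmt_5 {V : Type*} [Fintype V] (r : V) (par : V → V)
    (hroot : par r = r) (hconn : ∀ v : V, ∃ n : ℕ, par^[n] v = r)
    (k : ℕ) (s : Fin k → ℕ → V) (hs : ∀ i, IsTrajectory par (s i))
    (A : Finset V)
    (hanti : ∀ u ∈ A, ∀ v ∈ A, u ≠ v → ¬ InSubtree par u v)
    (ℓ : V → V) (b e : V → ℕ)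
    (hleaf : ∀ v ∈ A, IsLeafOf par (ℓ v) ∧ InSubtree par (ℓ v) v)
    (hbe : ∀ v ∈ A, b v < e v)
    (hdistinct : ∀ u ∈ A, ∀ v ∈ A,
      (b u = b v → u = v) ∧ (e u = e v → u = v) ∧ b u ≠ e v)
    (hserve : ∀ v ∈ A, ∃ i : Fin k, ∃ t : ℕ, b v < t ∧ t ≤ e v ∧ s i t = ℓ v)
    (τ : V → ℕ)
    (hτa : ∀ w : V, (∃ v ∈ A, InSubtree par v w) →
      ∀ u ∈ A, InSubtree par u w → e u ≤ τ w)
    (hτb : ∀ u w : V, (∃ v ∈ A, InSubtree par v u) → (∃ v ∈ A, InSubtree par v w) →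
      InSubtree par u w → τ u ≤ τ w) :
    ((∑ v ∈ A.filter (fun v => v ≠ r), ∑ i : Fin k,
          upcross par (s i) v (b v) (τ (par v))
      + ∑ v ∈ Finset.univ.filter
          (fun v => v ≠ r ∧ (∃ u ∈ A, InSubtree par u v) ∧ v ∉ A),
          ∑ i : Fin k, upcross par (s i) v (τ v) (τ (par v)) : ℕ) : ℤ)
      ≥ (A.card : ℤ) - (k : ℤ) := by
  classical
  by_cases hAne : A.Nonempty
  swap
  · rw [Finset.not_nonempty_iff_eq_empty] at hAne
    subst hAne
    simp
  obtain ⟨v0, hv0⟩ := hAne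
  obtain ⟨i0, t0, _⟩ := hserve v0 hv0
  -- choose serving data
  have hchoice : ∀ v : V, ∃ p : Fin k × ℕ,
      v ∈ A → b v < p.2 ∧ p.2 ≤ e v ∧ s p.1 p.2 = ℓ v := by
    intro v
    by_cases hv : v ∈ A
    · obtain ⟨i, t, h1, h2, h3⟩ := hserve v hv
      exact ⟨(i, t), fun _ => ⟨h1, h2, h3⟩⟩
    · exact ⟨(i0, 0), fun h => absurd h hv⟩
  choose P hP using hchoice
  set ii : V → Fin k := fun v => (P v).1 with hii_def
  set tt : V → ℕ := fun v => (P v).2 with htt_def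
  have hserve' : ∀ v ∈ A, b v < tt v ∧ tt v ≤ e v ∧ s (ii v) (tt v) = ℓ v := fun v hv => hP v hv
  -- distinct elements of A are not root
  have hvr : ∀ v ∈ A, ∀ w ∈ A, v ≠ w → v ≠ r := by
    intro v hv w hw hne hr
    exact hanti w hw v hv (Ne.symm hne) (by rw [hr]; exact hconn w)
  -- two elements of A with a common descendant are equal
  have samebr : ∀ z : V, ∀ v ∈ A, ∀ w ∈ A, InSubtree par z v → InSubtree par z w → v = w := by
    intro z v hv w hw h1 h2
    by_contra hne
    rcases anc_comp h1 h2 with h | h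
    · exact hanti v hv w hw hne h
    · exact hanti w hw v hv (Ne.symm hne) h
  -- contradiction branch of the climb
  have contrabr : ∀ v ∈ A, ∀ w ∈ A, v ≠ w → ∀ (x : V) (c tw : ℕ), tw ≤ e w →
      InSubtree par (ℓ w) x → InSubtree par v x → τ x < c → c ≤ tw → False := by
    intro v hv w hw hvw x c tw htw hl hvx hτc hctw
    have hlww : InSubtree par (ℓ w) w := (hleaf w hw).2
    rcases anc_comp hl hlww with h | h
    · exact hanti v hv w hw hvw (insub_trans hvx h)
    · have hew : e w ≤ τ x := hτa x ⟨v, hv, hvx⟩ w hw h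
      omega
  -- the climbing lemma
  have climb : ∀ N : ℕ, ∀ v ∈ A, ∀ w ∈ A, v ≠ w → ∀ (i : Fin k) (tw : ℕ),
      tw ≤ e w → s i tw = ℓ w →
      ∀ (x : V) (c : ℕ), Nat.find (hconn x) ≤ N → InSubtree par v x → v ≠ x →
      InSubtree par (s i c) x → τ x < c → c ≤ tw →
      ∃ x' c', c < c' ∧ c' ≤ tw ∧ x' ≠ r ∧ x' ∉ A ∧ (∃ u ∈ A, InSubtree par u x') ∧
        τ x' < c' ∧ c' ≤ τ (par x') ∧
        InSubtree par (s i (c' - 1)) x' ∧ ¬ InSubtree par (s i c') x' := by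
    intro N
    induction N with
    | zero =>
      intro v hv w hw hvw i tw htw hsw x c hd hvx hvx' hsc hτc hctw
      have hx : x = r := by
        have h0 : Nat.find (hconn x) = 0 := Nat.le_zero.mp hd
        have hspec := Nat.find_spec (hconn x)
        rw [h0] at hspec
        exact hspec
      exact (contrabr v hv w hw hvw x c tw htw (by rw [hx]; exact hconn (ℓ w)) hvx hτc hctw).elim
    | succ N ih =>
      intro v hv w hw hvw i tw htw hsw x c hd hvx hvx' hsc hτc hctw
      by_cases hl : InSubtree par (ℓ w) x
      · exact (contrabr v hv w hw hvw x c tw htw hl hvx hτc hctw).elim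
      · have hbx : ¬ InSubtree par (s i tw) x := by rw [hsw]; exact hl
        obtain ⟨c', hcc', hc'tw, hsc1, hsc2, hin, hout⟩ := exit_lemma_s5 (hs i) hsc hbx hctw
        have hxr : x ≠ r := by rintro rfl; exact hout (hconn _)
        have hxA : x ∉ A := fun hx => hanti v hv x hx hvx' hvx
        by_cases hcτ : c' ≤ τ (par x)
        · exact ⟨x, c', hcc', hc'tw, hxr, hxA, ⟨v, hv, hvx⟩, lt_trans hτc hcc', hcτ, hin, hout⟩
        · push_neg at hcτ
          have hd' : Nat.find (hconn (par x)) ≤ N := by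
            have hspec := Nat.find_spec (hconn x)
            have hx1 : 1 ≤ Nat.find (hconn x) := by
              by_contra hcon
              push_neg at hcon
              have h0 : Nat.find (hconn x) = 0 := by omega
              rw [h0] at hspec
              exact hxr hspec
            obtain ⟨n, hn⟩ : ∃ n, Nat.find (hconn x) = n + 1 :=
              ⟨Nat.find (hconn x) - 1, by omega⟩
            rw [hn] at hspec
            rw [Function.iterate_succ_apply] at hspec
            have hle : Nat.find (hconn (par x)) ≤ n := Nat.find_le hspec
            omega
          have hvpx : InSubtree par v (par x) := insub_trans hvx ⟨1, rfl⟩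
          have hvpx' : v ≠ par x := by
            intro heq
            obtain ⟨n, hn⟩ := hvx
            have hper : par^[n + 1] v = v := by
              rw [Function.iterate_succ_apply', hn, ← heq]
            exact (hvr v hv w hw hvw) (periodic_eq_root hroot hconn (Nat.succ_pos n) hper)
          have hscpx : InSubtree par (s i c') (par x) := by rw [hsc2]; exact ⟨0, rfl⟩
          obtain ⟨x'', c'', h1, h2, h3, h4, h5, h6, h7, h8, h9⟩ :=
            ih v hv w hw hvw i tw htw hsw (par x) c' hd' hvpx hvpx' hscpx hcτ hc'tw
          exact ⟨x'', c'', lt_trans hcc' h1, h2, h3, h4, h5, h6, h7, h8, h9⟩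
  -- the crossing lemma for a pair of requests served consecutively by a server
  have pairlem : ∀ v ∈ A, ∀ w ∈ A, v ≠ w → ∀ (i : Fin k) (tv tw : ℕ),
      b v < tv → s i tv = ℓ v → tw ≤ e w → s i tw = ℓ w → tv < tw →
      ∃ x c, tv < c ∧ c ≤ tw ∧
        InSubtree par (s i (c - 1)) x ∧ ¬ InSubtree par (s i c) x ∧
        ((x ∈ A ∧ x ≠ r ∧ b x < c ∧ c ≤ τ (par x)) ∨
         (x ∉ A ∧ x ≠ r ∧ (∃ u ∈ A, InSubtree par u x) ∧ τ x < c ∧ c ≤ τ (par x))) := by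
    intro v hv w hw hvw i tv_ tw_ hbtv hstv htwe hstw htvw
    have hvr' : v ≠ r := hvr v hv w hw hvw
    have hsv : InSubtree par (s i tv_) v := by rw [hstv]; exact (hleaf v hv).2
    have hlwv : ¬ InSubtree par (ℓ w) v := fun h =>
      hvw (samebr (ℓ w) v hv w hw h (hleaf w hw).2)
    have hswv : ¬ InSubtree par (s i tw_) v := by rw [hstw]; exact hlwv
    obtain ⟨c, hc1, hc2, hsc1, hsc2, hin, hout⟩ := exit_lemma_s5 (hs i) hsv hswv (le_of_lt htvw)
    by_cases hcτ : c ≤ τ (par v)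
    · exact ⟨v, c, hc1, hc2, hin, hout, Or.inl ⟨hv, hvr', lt_trans hbtv hc1, hcτ⟩⟩
    · push_neg at hcτ
      have hvpv : v ≠ par v := by
        intro h
        exact hvr' (periodic_eq_root hroot hconn one_pos (by rw [Function.iterate_one]; exact h.symm))
      obtain ⟨x', c', h1, h2, h3, h4, h5, h6, h7, h8, h9⟩ :=
        climb (Nat.find (hconn (par v))) v hv w hw hvw i tw_ htwe hstw (par v) c le_rfl
          ⟨1, rfl⟩ hvpv (by rw [hsc2]; exact ⟨0, rfl⟩) hcτ hc2
      exact ⟨x', c', lt_trans hc1 h1, h2, h8, h9, Or.inr ⟨h4, h3, h5, h6, h7⟩⟩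
  -- counting
  set M : Finset V := A.filter (fun v => ∀ u ∈ A, ii u = ii v → tt u ≤ tt v) with hM_def
  have hMk : M.card ≤ k := by
    have hinj : Set.InjOn ii M := by
      intro v hv v' hv' hiieq
      obtain ⟨hvA, hvmax⟩ := Finset.mem_filter.mp hv
      obtain ⟨hv'A, hv'max⟩ := Finset.mem_filter.mp hv'
      have h1 : tt v ≤ tt v' := hv'max v hvA hiieq
      have h2 : tt v' ≤ tt v := hvmax v' hv'A hiieq.symm
      have htteq : tt v = tt v' := le_antisymm h1 h2
      have hl1 : s (ii v) (tt v) = ℓ v := (hserve' v hvA).2.2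
      have hl2 : s (ii v') (tt v') = ℓ v' := (hserve' v' hv'A).2.2
      have hll : ℓ v = ℓ v' := by rw [← hl1, ← hl2, hiieq, htteq]
      exact samebr (ℓ v) v hvA v' hv'A (hleaf v hvA).2 (by rw [hll]; exact (hleaf v' hv'A).2)
    calc M.card ≤ (Finset.univ : Finset (Fin k)).card :=
          Finset.card_le_card_of_injOn ii (fun _ _ => Finset.mem_univ _) hinj
      _ = k := by simp
  set D : Finset V := A \ M with hD_def
  have hDA : ∀ v ∈ D, v ∈ A := fun v hv => (Finset.mem_sdiff.mp hv).1
  have hcardAD : A.card ≤ D.card + k := by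
    have h1 : D.card = A.card - M.card := by
      rw [hD_def, hM_def]
      exact Finset.card_sdiff_of_subset (Finset.filter_subset _ A)
    have h2 : M.card ≤ A.card := by
      rw [hM_def]
      exact Finset.card_le_card (Finset.filter_subset _ A)
    omega
  -- crossing data for each non-maximal request
  have hDdata : ∀ v : V, ∃ (x : V) (c : ℕ), v ∈ D →
      (tt v < c ∧ (∀ u ∈ A, ii u = ii v → tt v < tt u → c ≤ tt u) ∧
       InSubtree par (s (ii v) (c - 1)) x ∧ ¬ InSubtree par (s (ii v) c) x ∧
       ((x ∈ A ∧ x ≠ r ∧ b x < c ∧ c ≤ τ (par x)) ∨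
        (x ∉ A ∧ x ≠ r ∧ (∃ u ∈ A, InSubtree par u x) ∧ τ x < c ∧ c ≤ τ (par x)))) := by
    intro v
    by_cases hv : v ∈ D
    · have hvA : v ∈ A := hDA v hv
      have hvnM : v ∉ M := (Finset.mem_sdiff.mp hv).2
      have hsucc : (A.filter (fun u => ii u = ii v ∧ tt v < tt u)).Nonempty := by
        by_contra hcon
        rw [Finset.not_nonempty_iff_eq_empty, Finset.filter_eq_empty_iff] at hcon
        apply hvnM
        rw [hM_def, Finset.mem_filter]
        refine ⟨hvA, fun u hu hiu => ?_⟩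
        by_contra hle
        exact hcon hu ⟨hiu, by omega⟩
      obtain ⟨wmin, hwmin, hwle⟩ := Finset.exists_min_image _ tt hsucc
      obtain ⟨hwA, hwii, hwtt⟩ := Finset.mem_filter.mp hwmin
      have hvw : v ≠ wmin := fun h => absurd hwtt (by rw [h]; exact lt_irrefl _)
      obtain ⟨hb1, he1, hs1⟩ := hserve' v hvA
      obtain ⟨hb2, he2, hs2⟩ := hserve' wmin hwA
      have hs2' : s (ii v) (tt wmin) = ℓ wmin := by rw [← hwii]; exact hs2
      obtain ⟨x, c, hc1, hc2, hcr1, hcr2, hwd⟩ :=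
        pairlem v hvA wmin hwA hvw (ii v) (tt v) (tt wmin) hb1 hs1 he2 hs2' hwtt
      refine ⟨x, c, fun _ => ⟨hc1, ?_, hcr1, hcr2, hwd⟩⟩
      intro u hu hiu htu
      exact le_trans hc2 (hwle u (Finset.mem_filter.mpr ⟨hu, hiu, htu⟩))
    · exact ⟨r, 0, fun h => absurd h hv⟩
  choose X C hXC using hDdata
  -- injectivity of the crossing times within a server class
  have Cinj : ∀ v ∈ D, ∀ v' ∈ D, ii v = ii v' → C v = C v' → v = v' := by
    intro v hv v' hv' hiieq hCeq
    by_contra hne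
    obtain ⟨hc1, hc2, _, _, _⟩ := hXC v hv
    obtain ⟨hc1', hc2', _, _, _⟩ := hXC v' hv'
    have hvA : v ∈ A := hDA v hv
    have hv'A : v' ∈ A := hDA v' hv'
    have htne : tt v ≠ tt v' := by
      intro hteq
      have hl1 : s (ii v) (tt v) = ℓ v := (hserve' v hvA).2.2
      have hl2 : s (ii v') (tt v') = ℓ v' := (hserve' v' hv'A).2.2
      have hll : ℓ v = ℓ v' := by rw [← hl1, ← hl2, hiieq, hteq]
      exact hne (samebr (ℓ v) v hvA v' hv'A (hleaf v hvA).2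
        (by rw [hll]; exact (hleaf v' hv'A).2))
    rcases lt_or_gt_of_ne htne with h | h
    · have hle : C v ≤ tt v' := hc2 v' hv'A hiieq.symm h
      omega
    · have hle : C v' ≤ tt v := hc2' v hvA hiieq h
      omega
  -- weight function
  set w : V × Fin k → ℕ := fun p =>
    if p.1 ∈ A then upcross par (s p.2) p.1 (b p.1) (τ (par p.1))
    else upcross par (s p.2) p.1 (τ p.1) (τ (par p.1)) with hw_def
  have hDcard : D.card = ∑ p ∈ D.image (fun v => (X v, ii v)),
      (D.filter (fun v => (X v, ii v) = p)).card :=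
    Finset.card_eq_sum_card_fiberwise (fun v hv => Finset.mem_image_of_mem _ hv)
  have hfiber : ∀ p ∈ D.image (fun v => (X v, ii v)),
      (D.filter (fun v => (X v, ii v) = p)).card ≤ w p := by
    intro p _
    have hinj : Set.InjOn C (D.filter (fun v => (X v, ii v) = p)) := by
      intro v hv v' hv' hCeq
      obtain ⟨hvD, hvp⟩ := Finset.mem_filter.mp hv
      obtain ⟨hv'D, hv'p⟩ := Finset.mem_filter.mp hv'
      have hiieq : ii v = ii v' := congrArg Prod.snd (hvp.trans hv'p.symm)
      exact Cinj v hvD v' hv'D hiieq hCeq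
    by_cases hpA : p.1 ∈ A
    · have hmem : ∀ v ∈ D.filter (fun v => (X v, ii v) = p),
          C v ∈ {t : ℕ | b p.1 < t ∧ t ≤ τ (par p.1) ∧
            InSubtree par (s p.2 (t - 1)) p.1 ∧ ¬ InSubtree par (s p.2 t) p.1} := by
        intro v hv
        obtain ⟨hvD, hvp⟩ := Finset.mem_filter.mp hv
        obtain ⟨hXv, hiiv⟩ : X v = p.1 ∧ ii v = p.2 := by
          constructor <;> [exact congrArg Prod.fst hvp; exact congrArg Prod.snd hvp]
        obtain ⟨_, _, hcr1, hcr2, hwd⟩ := hXC v hvD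
        rcases hwd with ⟨_, _, hb3, hc4⟩ | ⟨hnA, _, _, _, _⟩
        · rw [← hXv, ← hiiv]
          exact ⟨hb3, hc4, hcr1, hcr2⟩
        · rw [hXv] at hnA
          exact absurd hpA hnA
      have hfin : ({t : ℕ | b p.1 < t ∧ t ≤ τ (par p.1) ∧
            InSubtree par (s p.2 (t - 1)) p.1 ∧ ¬ InSubtree par (s p.2 t) p.1}).Finite :=
        Set.Finite.subset (Set.finite_Iic (τ (par p.1))) (fun t ht => ht.2.1)
      have := card_le_ncard_of_injOn hmem hinj hfin
      rw [hw_def]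
      simpa [upcross, hpA] using this
    · have hmem : ∀ v ∈ D.filter (fun v => (X v, ii v) = p),
          C v ∈ {t : ℕ | τ p.1 < t ∧ t ≤ τ (par p.1) ∧
            InSubtree par (s p.2 (t - 1)) p.1 ∧ ¬ InSubtree par (s p.2 t) p.1} := by
        intro v hv
        obtain ⟨hvD, hvp⟩ := Finset.mem_filter.mp hv
        obtain ⟨hXv, hiiv⟩ : X v = p.1 ∧ ii v = p.2 := by
          constructor <;> [exact congrArg Prod.fst hvp; exact congrArg Prod.snd hvp]
        obtain ⟨_, _, hcr1, hcr2, hwd⟩ := hXC v hvD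
        rcases hwd with ⟨hinA, _, _, _⟩ | ⟨_, _, _, hτ3, hc4⟩
        · rw [hXv] at hinA
          exact absurd hinA hpA
        · rw [← hXv, ← hiiv]
          exact ⟨hτ3, hc4, hcr1, hcr2⟩
      have hfin : ({t : ℕ | τ p.1 < t ∧ t ≤ τ (par p.1) ∧
            InSubtree par (s p.2 (t - 1)) p.1 ∧ ¬ InSubtree par (s p.2 t) p.1}).Finite :=
        Set.Finite.subset (Set.finite_Iic (τ (par p.1))) (fun t ht => ht.2.1)
      have := card_le_ncard_of_injOn hmem hinj hfin
      rw [hw_def]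
      simpa [upcross, hpA] using this
  -- the image lands in the index set of the two sums
  set A' : Finset V := A.filter (fun v => v ≠ r) with hA'_def
  set B : Finset V := Finset.univ.filter
      (fun v => v ≠ r ∧ (∃ u ∈ A, InSubtree par u v) ∧ v ∉ A) with hB_def
  have himg : D.image (fun v => (X v, ii v)) ⊆ (A' ∪ B) ×ˢ Finset.univ := by
    intro p hp
    obtain ⟨v, hvD, rfl⟩ := Finset.mem_image.mp hp
    obtain ⟨_, _, _, _, hwd⟩ := hXC v hvD
    rcases hwd with ⟨h1, h2, _, _⟩ | ⟨h1, h2, h3, _, _⟩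
    · exact Finset.mem_product.mpr
        ⟨Finset.mem_union_left _ (Finset.mem_filter.mpr ⟨h1, h2⟩), Finset.mem_univ _⟩
    · exact Finset.mem_product.mpr
        ⟨Finset.mem_union_right _ (Finset.mem_filter.mpr ⟨Finset.mem_univ _, h2, h3, h1⟩),
          Finset.mem_univ _⟩
  have hdisj : Disjoint A' B := by
    rw [Finset.disjoint_left]
    intro x hx hx'
    exact ((Finset.mem_filter.mp hx').2).2.2 ((Finset.mem_filter.mp hx).1)
  have hsum : ∑ p ∈ (A' ∪ B) ×ˢ Finset.univ, w p =
      (∑ v ∈ A', ∑ i : Fin k, upcross par (s i) v (b v) (τ (par v)))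
      + ∑ v ∈ B, ∑ i : Fin k, upcross par (s i) v (τ v) (τ (par v)) := by
    rw [Finset.sum_product, Finset.sum_union hdisj]
    congr 1
    · refine Finset.sum_congr rfl (fun x hx => Finset.sum_congr rfl (fun i _ => ?_))
      have hxA : x ∈ A := (Finset.mem_filter.mp hx).1
      simp only [hw_def, if_pos hxA]
    · refine Finset.sum_congr rfl (fun x hx => Finset.sum_congr rfl (fun i _ => ?_))
      have hxA : x ∉ A := ((Finset.mem_filter.mp hx).2).2.2
      simp only [hw_def, if_neg hxA]
  have hDle : D.card ≤
      (∑ v ∈ A', ∑ i : Fin k, upcross par (s i) v (b v) (τ (par v)))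
      + ∑ v ∈ B, ∑ i : Fin k, upcross par (s i) v (τ v) (τ (par v)) := by
    rw [hDcard, ← hsum]
    calc ∑ p ∈ D.image (fun v => (X v, ii v)), (D.filter (fun v => (X v, ii v) = p)).card
        ≤ ∑ p ∈ D.image (fun v => (X v, ii v)), w p := Finset.sum_le_sum hfiber
      _ ≤ ∑ p ∈ (A' ∪ B) ×ˢ Finset.univ, w p := Finset.sum_le_sum_of_subset himg
  have hfinal : A.card ≤
      ((∑ v ∈ A', ∑ i : Fin k, upcross par (s i) v (b v) (τ (par v)))
      + ∑ v ∈ B, ∑ i : Fin k, upcross par (s i) v (τ v) (τ (par v))) + k := by omega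
  rw [ge_iff_le, sub_le_iff_le_add]
  exact_mod_cast hfinal
end
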